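/- Let κ ≤ 0, n ≥ 2, R > 0, λ ≥ 0, α ∈ ℝ with α < 0. Suppose F : (0,∞) → ℝ is positive, C¹, piecewise C², and satisfies: on (0,R], F'' + (n−1)(sn_κ'/sn_κ)F' + (λ − (n−1)/sn_κ²)F = 0 with F' ≥ −αF > 0; and on [R,∞), F(r) = F(R)e^{−α(r−R)}. Define H(r) = (F'(r))² + (n−1)F²(r)/sn_κ²(r) + 2α F(r)F'(r) + α(n−1)(sn_κ'(r)/sn_κ(r))F²(r). Then H is strictly monotonically decreasing on (0,∞). -/

import Mathlib

/-!
Write `s = sn κ`, so that `s > 0`, `s' ≥ 1` and `s s'' - s'² = -1`. Away from `r = R`, `H` is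
differentiable and `F''` can be eliminated from `H'`. On `(0, R)` the ODE gives
`H' = -(2(n-1)/s³)((s' - 1)(s²F'² + F²) + (sF' - F)²) - 2λF(F' + αF) + 2αF'² + α(n-1)F²/s²`,
negative because `F' ≥ -αF > 0`. On `(R, ∞)` we have `F' = -αF`, `F'' = α²F`, hence
`H' = F²(2α³ - ((n-1)/s³)(2s' + 3αs + 2α²s's²))`, negative since `1 + (3/2)x + x² > 0`.
Since `H` is continuous on `(0, ∞)`, the exceptional point `R` does not matter.
-/

/-- The space-form "generalized sine" function (for κ ≤ 0). -/
noncomputable def sn (κ t : ℝ) : ℝ :=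
  if 0 < κ then Real.sin (Real.sqrt κ * t) / Real.sqrt κ
  else if κ = 0 then t
  else Real.sinh (Real.sqrt (-κ) * t) / Real.sqrt (-κ)

open Set Topology Real

theorem strictAntiOn_Ioi_of_deriv_neg_of_ne {H : ℝ → ℝ} {a R : ℝ} (hR : a < R)
    (hc : ContinuousOn H (Ioi a)) (hH : ∀ r ∈ Ioi a, r ≠ R → deriv H r < 0) :
    StrictAntiOn H (Ioi a) := by
  have hleft : StrictAntiOn H (Ioc a R) :=
    strictAntiOn_of_deriv_neg (convex_Ioc a R) (hc.mono Ioc_subset_Ioi_self)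
      (by rw [interior_Ioc]; exact fun r hr => hH r hr.1 hr.2.ne)
  have hright : StrictAntiOn H (Ici R) :=
    strictAntiOn_of_deriv_neg (convex_Ici R) (hc.mono (Ici_subset_Ioi.2 hR))
      (by rw [interior_Ici]; exact fun r hr => hH r (hR.trans hr) hr.ne')
  rw [← Ioc_union_Ici_eq_Ioi hR]
  exact hleft.union hright (isGreatest_Ioc hR) isLeast_Ici

section ExpTail

variable {F : ℝ → ℝ} {R β r : ℝ}

theorem hasDerivAt_of_forall_ge_eq_exp (hF : ∀ x ≥ R, F x = F R * exp (β * (x - R)))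
    (hr : R < r) : HasDerivAt F (β * F r) r := by
  have hexp : HasDerivAt (fun x => F R * exp (β * (x - R))) (β * F r) r := by
    refine ((((hasDerivAt_id r).sub_const R).const_mul β).exp.const_mul (F R)).congr_deriv ?_
    simp only [id, mul_one, hF r hr.le]
    ring
  exact hexp.congr_of_eventuallyEq
    (eventually_gt_nhds hr |>.mono fun x hx => hF x hx.le)

theorem hasDerivAt_deriv_of_forall_ge_eq_exp (hF : ∀ x ≥ R, F x = F R * exp (β * (x - R)))
    (hr : R < r) : HasDerivAt (deriv F) (β ^ 2 * F r) r := by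
  have hderiv : deriv F =ᶠ[𝓝 r] fun x => β * F x :=
    eventually_gt_nhds hr |>.mono fun x hx => (hasDerivAt_of_forall_ge_eq_exp hF hx).deriv
  have := ((hasDerivAt_of_forall_ge_eq_exp hF hr).const_mul β).congr_of_eventuallyEq hderiv
  rwa [← mul_assoc, ← sq] at this

end ExpTail

section Sn

variable {κ : ℝ}

theorem hasDerivAt_sn (hκ : κ ≤ 0) (t : ℝ) :
    HasDerivAt (sn κ) (cosh (√(-κ) * t)) t := by
  rcases hκ.eq_or_lt with rfl | hκ
  · have : sn 0 = id := funext fun t => by simp [sn]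
    simpa [this] using hasDerivAt_id t
  · have hc : √(-κ) ≠ 0 := (sqrt_pos.2 (neg_pos.2 hκ)).ne'
    have : sn κ = fun t => sinh (√(-κ) * t) / √(-κ) :=
      funext fun t => by simp only [sn, if_neg hκ.not_gt, if_neg hκ.ne]
    rw [this]
    refine ((((hasDerivAt_id t).const_mul √(-κ)).sinh).div_const √(-κ)).congr_deriv ?_
    field_simp
    simp

theorem deriv_sn (hκ : κ ≤ 0) (t : ℝ) : deriv (sn κ) t = cosh (√(-κ) * t) :=
  (hasDerivAt_sn hκ t).deriv

theorem sn_pos (hκ : κ ≤ 0) {t : ℝ} (ht : 0 < t) : 0 < sn κ t := by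
  rcases hκ.eq_or_lt with rfl | hκ
  · simpa [sn] using ht
  · simp only [sn, if_neg hκ.not_gt, if_neg hκ.ne]
    have hc : 0 < √(-κ) := sqrt_pos.2 (neg_pos.2 hκ)
    exact div_pos (sinh_pos_iff.2 (mul_pos hc ht)) hc

theorem one_le_deriv_sn (hκ : κ ≤ 0) (t : ℝ) : 1 ≤ deriv (sn κ) t := by
  rw [deriv_sn hκ]
  exact one_le_cosh _

theorem hasDerivAt_deriv_sn (hκ : κ ≤ 0) (t : ℝ) :
    HasDerivAt (deriv (sn κ)) (-κ * sn κ t) t := by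
  rw [funext (deriv_sn hκ)]
  refine ((hasDerivAt_id t).const_mul √(-κ)).cosh.congr_deriv ?_
  rcases hκ.eq_or_lt with rfl | hκ
  · simp
  · simp only [sn, if_neg hκ.not_gt, if_neg hκ.ne, id, mul_one]
    have hc : √(-κ) ≠ 0 := (sqrt_pos.2 (neg_pos.2 hκ)).ne'
    field_simp
    rw [sq_sqrt (neg_nonneg.2 hκ.le)]
    ring

theorem sn_mul_sub_deriv_sn_sq (hκ : κ ≤ 0) (t : ℝ) :
    sn κ t * (-κ * sn κ t) - deriv (sn κ) t ^ 2 = -1 := by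
  rw [deriv_sn hκ]
  rcases hκ.eq_or_lt with rfl | hκ
  · simp
  · simp only [sn, if_neg hκ.not_gt, if_neg hκ.ne, cosh_sq]
    have hc : √(-κ) ≠ 0 := (sqrt_pos.2 (neg_pos.2 hκ)).ne'
    field_simp
    rw [sq_sqrt (neg_nonneg.2 hκ.le)]
    ring

end Sn

noncomputable section Energy

/-- `H r = energy n α (F r) (F' r) (sn κ r) (sn κ' r)`. -/
def energy (n α f g s c : ℝ) : ℝ :=
  g ^ 2 + (n - 1) * f ^ 2 / s ^ 2 + 2 * α * f * g + α * (n - 1) * (c / s) * f ^ 2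

/-- The derivative of `energy` along `(F, F', s, s')` when `F'' = g'` and `s s'' - s'² = -1`. -/
def energyDeriv (n α f g g' s c : ℝ) : ℝ :=
  2 * (g + α * f) * g' + 2 * α * g ^ 2
    + (n - 1) * (2 * f * g / s ^ 2 - 2 * c * f ^ 2 / s ^ 3 - α * f ^ 2 / s ^ 2
      + 2 * α * (c / s) * f * g)

variable {n α : ℝ}

theorem continuousOn_energy {s : Set ℝ} {F G S C : ℝ → ℝ} (hF : ContinuousOn F s)
    (hG : ContinuousOn G s) (hS : ContinuousOn S s) (hC : ContinuousOn C s)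
    (hS0 : ∀ x ∈ s, S x ≠ 0) :
    ContinuousOn (fun x => energy n α (F x) (G x) (S x) (C x)) s := by
  have hS2 : ∀ x ∈ s, S x ^ 2 ≠ 0 := fun x hx => pow_ne_zero 2 (hS0 x hx)
  exact (((hG.pow 2).add ((continuousOn_const.mul (hF.pow 2)).div (hS.pow 2) hS2)).add
    ((continuousOn_const.mul hF).mul hG)).add
    ((continuousOn_const.mul (hC.div hS hS0)).mul (hF.pow 2))

theorem hasDerivAt_energy {F G S C : ℝ → ℝ} {g' c' r : ℝ} (hF : HasDerivAt F (G r) r)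
    (hG : HasDerivAt G g' r) (hS : HasDerivAt S (C r) r) (hC : HasDerivAt C c' r)
    (hS0 : S r ≠ 0) (hSC : S r * c' - C r ^ 2 = -1) :
    HasDerivAt (fun x => energy n α (F x) (G x) (S x) (C x))
      (energyDeriv n α (F r) (G r) g' (S r) (C r)) r := by
  refine ((((hG.pow 2).add (((hF.pow 2).const_mul (n - 1)).div (hS.pow 2) (pow_ne_zero 2 hS0))).add
    ((hF.const_mul (2 * α)).mul hG)).add
    (((hC.div hS hS0).const_mul (α * (n - 1))).mul (hF.pow 2))).congr_deriv ?_
  have hc' : c' = (C r ^ 2 - 1) / S r := by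
    field_simp
    linarith
  simp only [energyDeriv, hc', Pi.pow_apply, Pi.div_apply]
  field_simp
  ring

theorem energyDeriv_neg_of_ode {lam f g s c : ℝ} (hn : 1 ≤ n) (hα : α < 0) (hlam : 0 ≤ lam)
    (hf : 0 < f) (hg : -α * f ≤ g) (hs : 0 < s) (hc : 1 ≤ c) :
    energyDeriv n α f g (-((n - 1) * (c / s) * g) - (lam - (n - 1) / s ^ 2) * f) s c < 0 := by
  have hgpos : 0 < g := (mul_pos (neg_pos.2 hα) hf).trans_le hg
  have hsq : 0 ≤ (c - 1) * (s ^ 2 * g ^ 2 + f ^ 2) + (s * g - f) ^ 2 := by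
    have := sub_nonneg.2 hc
    positivity
  have key : energyDeriv n α f g (-((n - 1) * (c / s) * g) - (lam - (n - 1) / s ^ 2) * f) s c
      = -(2 * (n - 1) / s ^ 3) * ((c - 1) * (s ^ 2 * g ^ 2 + f ^ 2) + (s * g - f) ^ 2)
        - 2 * lam * f * (g + α * f) + 2 * α * g ^ 2 + α * (n - 1) * f ^ 2 / s ^ 2 := by
    simp only [energyDeriv]
    field_simp
    ring
  rw [key]
  have h1 : 0 ≤ 2 * (n - 1) / s ^ 3 * ((c - 1) * (s ^ 2 * g ^ 2 + f ^ 2) + (s * g - f) ^ 2) :=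
    mul_nonneg (div_nonneg (by linarith) (pow_pos hs 3).le) hsq
  have h2 : 0 ≤ 2 * lam * f * (g + α * f) := by
    have : 0 ≤ g + α * f := by linarith
    positivity
  have h3 : α * (n - 1) * f ^ 2 / s ^ 2 ≤ 0 :=
    div_nonpos_of_nonpos_of_nonneg
      (mul_nonpos_of_nonpos_of_nonneg (mul_nonpos_of_nonpos_of_nonneg hα.le (by linarith))
        (sq_nonneg f)) (sq_nonneg s)
  linarith [mul_neg_of_neg_of_pos hα (pow_pos hgpos 2)]

theorem energyDeriv_neg_of_exp {f s c : ℝ} (hn : 1 ≤ n) (hα : α < 0) (hf : 0 < f) (hs : 0 < s)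
    (hc : 1 ≤ c) : energyDeriv n α f (-α * f) ((-α) ^ 2 * f) s c < 0 := by
  have key : energyDeriv n α f (-α * f) ((-α) ^ 2 * f) s c
      = f ^ 2 * (2 * α ^ 3 - (n - 1) / s ^ 3 * (2 * c + 3 * α * s + 2 * α ^ 2 * c * s ^ 2)) := by
    simp only [energyDeriv]
    field_simp
    ring
  rw [key]
  have hquad : 0 < 2 + 3 * α * s + 2 * α ^ 2 * s ^ 2 := by
    nlinarith [sq_nonneg (α * s + 3 / 4)]
  have hpos : 0 < 2 * c + 3 * α * s + 2 * α ^ 2 * c * s ^ 2 := by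
    nlinarith [mul_nonneg (sub_nonneg.2 hc) (sq_nonneg (α * s))]
  have hterm : 0 ≤ (n - 1) / s ^ 3 * (2 * c + 3 * α * s + 2 * α ^ 2 * c * s ^ 2) :=
    mul_nonneg (div_nonneg (by linarith) (pow_pos hs 3).le) hpos.le
  have hα3 : α ^ 3 < 0 := Odd.pow_neg (by decide) hα
  exact mul_neg_of_pos_of_neg (pow_pos hf 2) (by linarith)

end Energy

/-- Proposition 4.1: the function H built from the (extended) radial eigenfunction F
is strictly monotonically decreasing on (0, ∞). -/
theorem H_strictAnti (κ : ℝ) (hκ : κ ≤ 0) (n : ℕ) (hn : 2 ≤ n) (R : ℝ) (hR : 0 < R)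
    (lam : ℝ) (hlam : 0 ≤ lam) (α : ℝ) (hα : α < 0) (F H : ℝ → ℝ)
    (hFpos : ∀ r > (0 : ℝ), 0 < F r)
    (hF1 : ContDiffOn ℝ 1 F (Set.Ioi 0))
    (hF2 : ContDiffOn ℝ 2 F (Set.Ioc 0 R))
    (hode : ∀ r ∈ Set.Ioc (0 : ℝ) R,
      deriv (deriv F) r + ((n : ℝ) - 1) * (deriv (sn κ) r / sn κ r) * deriv F r
        + (lam - ((n : ℝ) - 1) / (sn κ r) ^ 2) * F r = 0)
    (hgr : ∀ r ∈ Set.Ioc (0 : ℝ) R, -α * F r ≤ deriv F r)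
    (hext : ∀ r ≥ R, F r = F R * Real.exp (-α * (r - R)))
    (hH : ∀ r, H r = (deriv F r) ^ 2 + ((n : ℝ) - 1) * (F r) ^ 2 / (sn κ r) ^ 2
        + 2 * α * F r * deriv F r
        + α * ((n : ℝ) - 1) * (deriv (sn κ) r / sn κ r) * (F r) ^ 2) :
    StrictAntiOn H (Set.Ioi 0) := by
  have hn1 : (1 : ℝ) ≤ n := by exact_mod_cast (by omega : 1 ≤ n)
  have hH' : H = fun r => energy n α (F r) (deriv F r) (sn κ r) (deriv (sn κ) r) := funext hH
  have hsn (r : ℝ) : HasDerivAt (sn κ) (deriv (sn κ) r) r :=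
    (hasDerivAt_sn hκ r).differentiableAt.hasDerivAt
  have hF' (r : ℝ) (hr : 0 < r) : HasDerivAt F (deriv F r) r :=
    ((hF1.differentiableOn one_ne_zero r hr).differentiableAt (Ioi_mem_nhds hr)).hasDerivAt
  subst hH'
  refine strictAntiOn_Ioi_of_deriv_neg_of_ne hR ?_ fun r hr hrR => ?_
  · exact continuousOn_energy hF1.continuousOn
      (hF1.continuousOn_deriv_of_isOpen isOpen_Ioi le_rfl)
      (fun x _ => (hsn x).continuousAt.continuousWithinAt)
      (fun x _ => (hasDerivAt_deriv_sn hκ x).continuousAt.continuousWithinAt)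
      fun x hx => (sn_pos hκ hx).ne'
  have hderiv {g' : ℝ} (hF'' : HasDerivAt (deriv F) g' r) :=
    hasDerivAt_energy (n := n) (α := α) (hF' r hr) hF'' (hsn r) (hasDerivAt_deriv_sn hκ r)
      (sn_pos hκ hr).ne' (sn_mul_sub_deriv_sn_sq hκ r)
  rcases hrR.lt_or_gt with hrR | hrR
  · have hF'' : HasDerivAt (deriv F) (deriv (deriv F) r) r :=
      (((hF2.mono Ioo_subset_Ioc_self).deriv_of_isOpen isOpen_Ioo (by norm_num)).differentiableOn
        one_ne_zero r ⟨hr, hrR⟩ |>.differentiableAt (Ioo_mem_nhds hr hrR)).hasDerivAt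
    have hF''_eq : deriv (deriv F) r = -((n - 1) * (deriv (sn κ) r / sn κ r) * deriv F r)
        - (lam - (n - 1) / sn κ r ^ 2) * F r := by
      linarith [hode r ⟨hr, hrR.le⟩]
    rw [(hderiv hF'').deriv, hF''_eq]
    exact energyDeriv_neg_of_ode hn1 hα hlam (hFpos r hr) (hgr r ⟨hr, hrR.le⟩) (sn_pos hκ hr)
      (one_le_deriv_sn hκ r)
  · rw [(hderiv (hasDerivAt_deriv_of_forall_ge_eq_exp hext hrR)).deriv,
      (hasDerivAt_of_forall_ge_eq_exp hext hrR).deriv]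
    exact energyDeriv_neg_of_exp hn1 hα (hFpos r hr) (sn_pos hκ hr) (one_le_deriv_sn hκ r)
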